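/- Let l₁, l₂ ∈ ℕ, m₁, m₂ ∈ ℤ, c ∈ ℚ_p, let k = (k₁,k₂,k₃) ∈ GL₂(ℤ_p)³, and set X := x(d)·(diag(p^{−l₁},1), diag(1,p^{l₂}), [[p^{m₁},c],[0,p^{m₂}]])·(k₁,k₂,k₃) ∈ V. Then for j = 1 and j = 2 one has |d|_p · p^{−2l_j} · m_j(X)² = |P(X)|_p, where m_j(X) denotes the maximum of the p-adic absolute values of the three coordinates of F_j(X). -/

import Mathlib

/-!
Both `F₁` and `F₂` are equivariant, once `(a, b, c)` is read as the binary quadratic form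
`a X² + b XY + c Y²`: acting by `(g₁, g₂, g₃)` substitutes `g₁⁻¹` (resp. `g₂ᵀ`) into `F₁`
(resp. `F₂`) and scales it by a product of determinants, and `P` is the discriminant of either
form. For `k ∈ GL₂(ℤ_p)³` the scalars are units and the substitutions are integral with integral
inverses, so `m_j` and `|P|` do not see `k`. At `x(d)` one has `F₁ = (d, 0, -1)` and
`F₂ = (1, 0, -d)`; the diagonal matrices turn these into multiples of `(p^{2l₁} d, 0, -1)` and
`(1, 0, -p^{2l₂} d)`; there the unit coefficient dominates `m_j`, and the discriminant is
`4 p^{2l_j} d` times the square of the scalar, with `|4| = 1` as `p` is odd.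
-/

open Matrix

/-- `2 × 2` matrices over `ℚ_p`. -/
abbrev M2Q (p : ℕ) [Fact p.Prime] := Matrix (Fin 2) (Fin 2) ℚ_[p]

/-- The right action of triples of (invertible) matrices on `V = M₂(ℚ_p) × M₂(ℚ_p)`:
`(x,y)·(g₁,g₂,g₃) := (a·g₁⁻¹xg₂ + c·g₁⁻¹yg₂, b·g₁⁻¹xg₂ + d·g₁⁻¹yg₂)` where
`g₃ = [[a,b],[c,d]]`. -/
noncomputable def actM {p : ℕ} [Fact p.Prime] (v : M2Q p × M2Q p)
    (g : M2Q p × M2Q p × M2Q p) : M2Q p × M2Q p :=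
  ((g.2.2 0 0) • (g.1⁻¹ * v.1 * g.2.1) + (g.2.2 1 0) • (g.1⁻¹ * v.2 * g.2.1),
   (g.2.2 0 1) • (g.1⁻¹ * v.1 * g.2.1) + (g.2.2 1 1) • (g.1⁻¹ * v.2 * g.2.1))

/-- `P(x,y) = −det(x·y^ι − y·x^ι)`, where `m^ι` is the adjugate. -/
noncomputable def Pq {p : ℕ} [Fact p.Prime] (v : M2Q p × M2Q p) : ℚ_[p] :=
  - (v.1 * v.2.adjugate - v.2 * v.1.adjugate).det

/-- The equivariant map `F₁ : V → ℚ_p³`. -/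
noncomputable def Fmap1 {p : ℕ} [Fact p.Prime] (v : M2Q p × M2Q p) :
    ℚ_[p] × ℚ_[p] × ℚ_[p] :=
  (v.1 0 0 * v.2 0 1 - v.1 0 1 * v.2 0 0,
   (v.1 0 0 * v.2 1 1 - v.1 0 1 * v.2 1 0) + (v.1 1 0 * v.2 0 1 - v.1 1 1 * v.2 0 0),
   v.1 1 0 * v.2 1 1 - v.1 1 1 * v.2 1 0)

/-- The equivariant map `F₂ : V → ℚ_p³`. -/
noncomputable def Fmap2 {p : ℕ} [Fact p.Prime] (v : M2Q p × M2Q p) :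
    ℚ_[p] × ℚ_[p] × ℚ_[p] :=
  (v.1 0 0 * v.2 1 0 - v.2 0 0 * v.1 1 0,
   (v.1 0 0 * v.2 1 1 - v.2 0 1 * v.1 1 0) + (v.1 0 1 * v.2 1 0 - v.2 0 0 * v.1 1 1),
   v.1 0 1 * v.2 1 1 - v.2 0 1 * v.1 1 1)

/-- `m_j(X)`: the maximum of the `p`-adic absolute values of the three coordinates of
`F_j(X)`. -/
noncomputable def mcoord {p : ℕ} [Fact p.Prime] (t : ℚ_[p] × ℚ_[p] × ℚ_[p]) : ℝ :=
  max (max ‖t.1‖ ‖t.2.1‖) ‖t.2.2‖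

/-- The coercion of a matrix over `ℤ_p` to a matrix over `ℚ_p`. -/
noncomputable def coeM {p : ℕ} [Fact p.Prime] (k : Matrix (Fin 2) (Fin 2) ℤ_[p]) :
    M2Q p :=
  k.map (fun z => (z : ℚ_[p]))

namespace BinaryQuadraticForm

variable {R : Type*} [CommRing R]

/-- `(a, b, c)` stands for `a X² + b XY + c Y²`; `subst h` substitutes `(X, Y) ↦ (X, Y) h`. -/
def subst (h : Matrix (Fin 2) (Fin 2) R) (t : R × R × R) : R × R × R :=
  (h 0 0 ^ 2 * t.1 + h 0 0 * h 0 1 * t.2.1 + h 0 1 ^ 2 * t.2.2,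
   2 * h 0 0 * h 1 0 * t.1 + (h 0 0 * h 1 1 + h 0 1 * h 1 0) * t.2.1 + 2 * h 0 1 * h 1 1 * t.2.2,
   h 1 0 ^ 2 * t.1 + h 1 0 * h 1 1 * t.2.1 + h 1 1 ^ 2 * t.2.2)

def disc (t : R × R × R) : R := t.2.1 ^ 2 - 4 * t.1 * t.2.2

theorem subst_subst (h h' : Matrix (Fin 2) (Fin 2) R) (t : R × R × R) :
    subst h' (subst h t) = subst (h' * h) t := by
  simp only [subst, Matrix.mul_apply, Fin.sum_univ_two, Prod.mk.injEq]
  refine ⟨by ring, by ring, by ring⟩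

@[simp]
theorem subst_one (t : R × R × R) : subst 1 t = t := by
  simp [subst]

theorem subst_diag (a b : R) (t : R × R × R) :
    subst !![a, 0; 0, b] t = (a ^ 2 * t.1, a * b * t.2.1, b ^ 2 * t.2.2) := by
  simp [subst]

theorem disc_subst (h : Matrix (Fin 2) (Fin 2) R) (t : R × R × R) :
    disc (subst h t) = h.det ^ 2 * disc t := by
  simp only [disc, subst, Matrix.det_fin_two]
  ring

theorem disc_smul (e : R) (t : R × R × R) : disc (e • t) = e ^ 2 * disc t := by
  simp only [disc, Prod.smul_fst, Prod.smul_snd, smul_eq_mul]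
  ring

end BinaryQuadraticForm

open BinaryQuadraticForm

theorem inv_diag_fin_two {K : Type*} [Field K] {a b : K} (ha : a ≠ 0) (hb : b ≠ 0) :
    !![a, 0; 0, b]⁻¹ = !![a⁻¹, 0; 0, b⁻¹] :=
  Matrix.inv_eq_right_inv (by simp [ha, hb, Matrix.one_fin_two])

section PadicForms

variable {p : ℕ} [Fact p.Prime]

theorem Fmap1_actM (v : M2Q p × M2Q p) (g : M2Q p × M2Q p × M2Q p) :
    Fmap1 (actM v g) = (g.2.1.det * g.2.2.det) • subst g.1⁻¹ (Fmap1 v) := by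
  simp only [actM, Fmap1, subst, Matrix.det_fin_two, Matrix.add_apply, Matrix.smul_apply,
    Matrix.mul_apply, Fin.sum_univ_two, smul_eq_mul, Prod.smul_mk, Prod.mk.injEq]
  refine ⟨by ring, by ring, by ring⟩

theorem Fmap2_actM (v : M2Q p × M2Q p) (g : M2Q p × M2Q p × M2Q p) :
    Fmap2 (actM v g) = (g.1⁻¹.det * g.2.2.det) • subst g.2.1ᵀ (Fmap2 v) := by
  simp only [actM, Fmap2, subst, Matrix.det_fin_two, Matrix.add_apply, Matrix.smul_apply,
    Matrix.mul_apply, Fin.sum_univ_two, smul_eq_mul, Matrix.transpose_apply, Prod.smul_mk,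
    Prod.mk.injEq]
  refine ⟨by ring, by ring, by ring⟩

theorem Pq_eq_disc_Fmap1 (v : M2Q p × M2Q p) : Pq v = disc (Fmap1 v) := by
  simp only [Pq, Fmap1, disc, Matrix.adjugate_fin_two, Matrix.det_fin_two, Matrix.sub_apply,
    Matrix.mul_apply, Fin.sum_univ_two, Matrix.of_apply, Matrix.cons_val', Matrix.cons_val_zero,
    Matrix.cons_val_one, Matrix.empty_val', Matrix.cons_val_fin_one]
  ring

theorem Pq_eq_disc_Fmap2 (v : M2Q p × M2Q p) : Pq v = disc (Fmap2 v) := by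
  simp only [Pq, Fmap2, disc, Matrix.adjugate_fin_two, Matrix.det_fin_two, Matrix.sub_apply,
    Matrix.mul_apply, Fin.sum_univ_two, Matrix.of_apply, Matrix.cons_val', Matrix.cons_val_zero,
    Matrix.cons_val_one, Matrix.empty_val', Matrix.cons_val_fin_one]
  ring

theorem coeM_apply (k : Matrix (Fin 2) (Fin 2) ℤ_[p]) (i j : Fin 2) :
    coeM k i j = (k i j : ℚ_[p]) := rfl

theorem coeM_one : coeM (1 : Matrix (Fin 2) (Fin 2) ℤ_[p]) = 1 :=
  map_one PadicInt.Coe.ringHom.mapMatrix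

theorem coeM_mul (k k' : Matrix (Fin 2) (Fin 2) ℤ_[p]) : coeM (k * k') = coeM k * coeM k' :=
  map_mul PadicInt.Coe.ringHom.mapMatrix k k'

theorem coeM_transpose (k : Matrix (Fin 2) (Fin 2) ℤ_[p]) : (coeM k)ᵀ = coeM kᵀ := rfl

theorem det_coeM (k : Matrix (Fin 2) (Fin 2) ℤ_[p]) : (coeM k).det = k.det :=
  (RingHom.map_det PadicInt.Coe.ringHom k).symm

theorem norm_det_coeM {k : Matrix (Fin 2) (Fin 2) ℤ_[p]} (hk : IsUnit k) :
    ‖(coeM k).det‖ = 1 := by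
  rw [det_coeM]
  exact PadicInt.isUnit_iff.mp ((Matrix.isUnit_iff_isUnit_det k).mp hk)

theorem inv_coeM {k : Matrix (Fin 2) (Fin 2) ℤ_[p]} (hk : IsUnit k) : (coeM k)⁻¹ = coeM k⁻¹ :=
  Matrix.inv_eq_right_inv <| by
    rw [← coeM_mul, Matrix.mul_nonsing_inv k ((Matrix.isUnit_iff_isUnit_det k).mp hk), coeM_one]

theorem mcoord_smul (e : ℚ_[p]) (t : ℚ_[p] × ℚ_[p] × ℚ_[p]) :
    mcoord (e • t) = ‖e‖ * mcoord t := by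
  simp only [mcoord, Prod.smul_fst, Prod.smul_snd, smul_eq_mul, norm_mul,
    mul_max_of_nonneg _ _ (norm_nonneg e)]

theorem norm_linComb_le_mcoord (a b c : ℤ_[p]) (t : ℚ_[p] × ℚ_[p] × ℚ_[p]) :
    ‖(a : ℚ_[p]) * t.1 + b * t.2.1 + c * t.2.2‖ ≤ mcoord t := by
  have term_le : ∀ (z : ℤ_[p]) (x : ℚ_[p]), ‖x‖ ≤ mcoord t → ‖(z : ℚ_[p]) * x‖ ≤ mcoord t :=
    fun z x hx => by
      rw [norm_mul]
      exact (mul_le_of_le_one_left (norm_nonneg _) z.norm_le_one).trans hx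
  refine (Padic.nonarchimedean _ _).trans (max_le ((Padic.nonarchimedean _ _).trans
    (max_le (term_le a _ ?_) (term_le b _ ?_))) (term_le c _ ?_))
  all_goals simp [mcoord]

theorem mcoord_subst_coeM_le (k : Matrix (Fin 2) (Fin 2) ℤ_[p]) (t : ℚ_[p] × ℚ_[p] × ℚ_[p]) :
    mcoord (subst (coeM k) t) ≤ mcoord t := by
  have coe_two : ((2 : ℤ_[p]) : ℚ_[p]) = 2 := map_ofNat PadicInt.Coe.ringHom 2
  refine max_le (max_le ?_ ?_) ?_
  · have := norm_linComb_le_mcoord (k 0 0 ^ 2) (k 0 0 * k 0 1) (k 0 1 ^ 2) t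
    push_cast at this
    simpa only [subst, coeM_apply] using this
  · have := norm_linComb_le_mcoord (2 * k 0 0 * k 1 0) (k 0 0 * k 1 1 + k 0 1 * k 1 0)
      (2 * k 0 1 * k 1 1) t
    push_cast [coe_two] at this
    simpa only [subst, coeM_apply] using this
  · have := norm_linComb_le_mcoord (k 1 0 ^ 2) (k 1 0 * k 1 1) (k 1 1 ^ 2) t
    push_cast at this
    simpa only [subst, coeM_apply] using this

theorem mcoord_subst_coeM {k : Matrix (Fin 2) (Fin 2) ℤ_[p]} (hk : IsUnit k)
    (t : ℚ_[p] × ℚ_[p] × ℚ_[p]) : mcoord (subst (coeM k) t) = mcoord t := by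
  obtain ⟨k', hk'⟩ := hk.exists_left_inv
  refine le_antisymm (mcoord_subst_coeM_le k t) ?_
  simpa [subst_subst, ← coeM_mul, hk', coeM_one] using mcoord_subst_coeM_le k' (subst (coeM k) t)

theorem mcoord_Fmap1_actM_coeM (v : M2Q p × M2Q p) (k₁ k₂ k₃ : GL (Fin 2) ℤ_[p]) :
    mcoord (Fmap1 (actM v (coeM k₁, coeM k₂, coeM k₃))) = mcoord (Fmap1 v) := by
  rw [Fmap1_actM, mcoord_smul, norm_mul, norm_det_coeM k₂.isUnit, norm_det_coeM k₃.isUnit,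
    inv_coeM k₁.isUnit, mcoord_subst_coeM (Matrix.isUnit_nonsing_inv_iff.mpr k₁.isUnit), one_mul,
    one_mul]

theorem mcoord_Fmap2_actM_coeM (v : M2Q p × M2Q p) (k₁ k₂ k₃ : GL (Fin 2) ℤ_[p]) :
    mcoord (Fmap2 (actM v (coeM k₁, coeM k₂, coeM k₃))) = mcoord (Fmap2 v) := by
  rw [Fmap2_actM]
  dsimp only
  rw [mcoord_smul, norm_mul, inv_coeM k₁.isUnit,
    norm_det_coeM (Matrix.isUnit_nonsing_inv_iff.mpr k₁.isUnit), norm_det_coeM k₃.isUnit,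
    coeM_transpose, mcoord_subst_coeM ((Matrix.isUnit_transpose _).mpr k₂.isUnit), one_mul, one_mul]

theorem norm_Pq_actM_coeM (v : M2Q p × M2Q p) (k₁ k₂ k₃ : GL (Fin 2) ℤ_[p]) :
    ‖Pq (actM v (coeM k₁, coeM k₂, coeM k₃))‖ = ‖Pq v‖ := by
  rw [Pq_eq_disc_Fmap1, Pq_eq_disc_Fmap1, Fmap1_actM, disc_smul, disc_subst, norm_mul, norm_mul,
    norm_pow, norm_pow, norm_mul, norm_det_coeM k₂.isUnit, norm_det_coeM k₃.isUnit,
    inv_coeM k₁.isUnit, norm_det_coeM (Matrix.isUnit_nonsing_inv_iff.mpr k₁.isUnit)]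
  simp

theorem Fmap1_actM_xd (d a b : ℚ_[p]) (ha : a ≠ 0) (g₃ : M2Q p) :
    Fmap1 (actM (1, !![0, d; 1, 0]) (!![a⁻¹, 0; 0, 1], !![1, 0; 0, b], g₃)) =
      (b * g₃.det) • (a ^ 2 * d, 0, -1) := by
  rw [Fmap1_actM, inv_diag_fin_two (inv_ne_zero ha) one_ne_zero, inv_inv, inv_one, subst_diag]
  simp [Fmap1]

theorem Fmap2_actM_xd (d a b : ℚ_[p]) (ha : a ≠ 0) (g₃ : M2Q p) :
    Fmap2 (actM (1, !![0, d; 1, 0]) (!![a⁻¹, 0; 0, 1], !![1, 0; 0, b], g₃)) =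
      (a * g₃.det) • (1, 0, -(b ^ 2 * d)) := by
  have diag_transpose : !![1, 0; 0, b]ᵀ = !![1, 0; 0, b] := by
    ext i j
    fin_cases i <;> fin_cases j <;> rfl
  rw [Fmap2_actM]
  dsimp only
  rw [inv_diag_fin_two (inv_ne_zero ha) one_ne_zero, inv_inv, inv_one, diag_transpose, subst_diag]
  simp [Fmap2]

theorem norm_mul_mcoord_sq_eq_norm_disc (hp : Odd p) {a : ℚ_[p]} (ha : ‖a‖ ≤ 1) (e : ℚ_[p])
    {t : ℚ_[p] × ℚ_[p] × ℚ_[p]} (ht : t = e • (a, 0, -1) ∨ t = e • (1, 0, -a)) :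
    ‖a‖ * mcoord t ^ 2 = ‖disc t‖ := by
  have norm_four : ‖(4 : ℚ_[p])‖ = 1 := by
    simpa using Padic.norm_natCast_eq_one_iff.mpr (Nat.Coprime.pow_right 2 hp.coprime_two_right)
  rcases ht with rfl | rfl <;>
    simp only [mcoord_smul, disc_smul, norm_mul, norm_pow] <;>
    simp [mcoord, disc, norm_four, ha] <;> ring

end PadicForms

theorem stmt15_general (p : ℕ) [Fact p.Prime] (hp : Odd p) (d : ℤ_[p])
    (l₁ l₂ : ℕ) (m₁ m₂ : ℤ) (c : ℚ_[p]) (k₁ k₂ k₃ : GL (Fin 2) ℤ_[p])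
    (X : M2Q p × M2Q p)
    (hX : X = actM
      (actM ((1 : M2Q p), !![0, (d : ℚ_[p]); 1, 0])
        (!![(p : ℚ_[p]) ^ (-(l₁ : ℤ)), 0; 0, 1],
         !![1, 0; 0, (p : ℚ_[p]) ^ (l₂ : ℕ)],
         !![(p : ℚ_[p]) ^ m₁, c; 0, (p : ℚ_[p]) ^ m₂]))
      (coeM (k₁ : Matrix (Fin 2) (Fin 2) ℤ_[p]),
       coeM (k₂ : Matrix (Fin 2) (Fin 2) ℤ_[p]),
       coeM (k₃ : Matrix (Fin 2) (Fin 2) ℤ_[p]))) :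
    ‖(d : ℚ_[p])‖ * ((p : ℝ) ^ (2 * l₁))⁻¹ * mcoord (Fmap1 X) ^ 2 = ‖Pq X‖ ∧
    ‖(d : ℚ_[p])‖ * ((p : ℝ) ^ (2 * l₂))⁻¹ * mcoord (Fmap2 X) ^ 2 = ‖Pq X‖ := by
  have hp0 : (p : ℚ_[p]) ≠ 0 := Nat.cast_ne_zero.mpr (Fact.out : p.Prime).ne_zero
  have norm_coeff (l : ℕ) :
      ‖((p : ℚ_[p]) ^ l) ^ 2 * d‖ = ‖(d : ℚ_[p])‖ * ((p : ℝ) ^ (2 * l))⁻¹ := by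
    rw [norm_mul, norm_pow, norm_pow, Padic.norm_p, ← pow_mul, inv_pow, mul_comm, mul_comm l]
  have coeff_le_one (l : ℕ) : ‖((p : ℚ_[p]) ^ l) ^ 2 * d‖ ≤ 1 := by
    rw [norm_coeff]
    exact mul_le_one₀ (PadicInt.norm_le_one d) (by positivity)
      (inv_le_one_of_one_le₀ (one_le_pow₀ (by exact_mod_cast (Fact.out : p.Prime).one_le)))
  rw [_root_.zpow_neg, zpow_natCast] at hX
  subst hX
  rw [mcoord_Fmap1_actM_coeM, mcoord_Fmap2_actM_coeM, norm_Pq_actM_coeM, ← norm_coeff,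
    ← norm_coeff]
  constructor
  · rw [Pq_eq_disc_Fmap1, Fmap1_actM_xd _ _ _ (pow_ne_zero _ hp0)]
    exact norm_mul_mcoord_sq_eq_norm_disc hp (coeff_le_one l₁) _ (Or.inl rfl)
  · rw [Pq_eq_disc_Fmap2, Fmap2_actM_xd _ _ _ (pow_ne_zero _ hp0)]
    exact norm_mul_mcoord_sq_eq_norm_disc hp (coeff_le_one l₂) _ (Or.inr rfl)

/-- for `X = x(d)·(diag(p^{−l₁},1), diag(1,p^{l₂}), [[p^{m₁},c],[0,p^{m₂}]])·k`
with `k ∈ GL₂(ℤ_p)³`, one has `|d|·p^{−2l_j}·m_j(X)² = |P(X)|` for `j = 1, 2`. -/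
theorem stmt15 (p : ℕ) [Fact p.Prime] (hp : Odd p) (d : ℤ_[p])
    (hd : ‖(d : ℚ_[p])‖ = 1 ∨ ‖(d : ℚ_[p])‖ = (p : ℝ)⁻¹)
    (l₁ l₂ : ℕ) (m₁ m₂ : ℤ) (c : ℚ_[p]) (k₁ k₂ k₃ : GL (Fin 2) ℤ_[p])
    (X : M2Q p × M2Q p)
    (hX : X = actM
      (actM ((1 : M2Q p), !![0, (d : ℚ_[p]); 1, 0])
        (!![(p : ℚ_[p]) ^ (-(l₁ : ℤ)), 0; 0, 1],
         !![1, 0; 0, (p : ℚ_[p]) ^ (l₂ : ℕ)],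
         !![(p : ℚ_[p]) ^ m₁, c; 0, (p : ℚ_[p]) ^ m₂]))
      (coeM (k₁ : Matrix (Fin 2) (Fin 2) ℤ_[p]),
       coeM (k₂ : Matrix (Fin 2) (Fin 2) ℤ_[p]),
       coeM (k₃ : Matrix (Fin 2) (Fin 2) ℤ_[p]))) :
    ‖(d : ℚ_[p])‖ * ((p : ℝ) ^ (2 * l₁))⁻¹ * mcoord (Fmap1 X) ^ 2 = ‖Pq X‖ ∧
    ‖(d : ℚ_[p])‖ * ((p : ℝ) ^ (2 * l₂))⁻¹ * mcoord (Fmap2 X) ^ 2 = ‖Pq X‖ :=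
  stmt15_general p hp d l₁ l₂ m₁ m₂ c k₁ k₂ k₃ X hX
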